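/- Let k ≥ 2, let σ be a cyclic permutation of [n], let C_1, …, C_n be the chain decomposition of the intervals along σ, and let A be a collection of intervals along σ that contains neither Y_k nor Y_k' as a weak subposet. Then there are no three consecutive chains C_i, C_{i+1}, C_{i+2} (indices modulo n) such that C_i is of type (k+1)^R, |A ∩ C_{i+1}| = k−1, and C_{i+2} is of type (k+1)^L. -/

import Mathlib

open Finset

/-- The family `𝒜` contains `Y_k` as a (weak) subposet: `k + 2` pairwise distinct sets
`A 1 ⊆ A 2 ⊆ ⋯ ⊆ A k`, `A k ⊆ B`, `A k ⊆ C`, all in `𝒜`. -/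
def ContainsYk {n : ℕ} (k : ℕ) (𝒜 : Finset (Finset (Fin n))) : Prop :=
  ∃ (A : Fin k → Finset (Fin n)) (B C : Finset (Fin n)),
    (∀ i, A i ∈ 𝒜) ∧ B ∈ 𝒜 ∧ C ∈ 𝒜 ∧
    Function.Injective A ∧ (∀ i, A i ≠ B) ∧ (∀ i, A i ≠ C) ∧ B ≠ C ∧
    (∀ i j : Fin k, i ≤ j → A i ⊆ A j) ∧ (∀ i, A i ⊆ B) ∧ (∀ i, A i ⊆ C)

/-- The family `𝒜` contains `Y_k'` as a (weak) subposet: `k + 2` pairwise distinct sets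
`A k ⊆ A (k-1) ⊆ ⋯ ⊆ A 1`, `B ⊆ A k`, `C ⊆ A k`, all in `𝒜`. -/
def ContainsYk' {n : ℕ} (k : ℕ) (𝒜 : Finset (Finset (Fin n))) : Prop :=
  ∃ (A : Fin k → Finset (Fin n)) (B C : Finset (Fin n)),
    (∀ i, A i ∈ 𝒜) ∧ B ∈ 𝒜 ∧ C ∈ 𝒜 ∧
    Function.Injective A ∧ (∀ i, A i ≠ B) ∧ (∀ i, A i ≠ C) ∧ B ≠ C ∧
    (∀ i j : Fin k, i ≤ j → A j ⊆ A i) ∧ (∀ i, B ⊆ A i) ∧ (∀ i, C ⊆ A i)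

/-- The interval `{x i, x (i+1), …, x (i+t)}` along the cyclic permutation `σ`
(indices taken modulo `n`). -/
def cycInterval (n : ℕ) (σ : ZMod n ≃ Fin n) (i : ZMod n) (t : ℕ) : Finset (Fin n) :=
  (Finset.range (t + 1)).image fun s : ℕ => σ (i + (s : ZMod n))

/-- `I` is an interval along the cyclic permutation `σ`; neither `∅` nor `[n]`
is an interval. -/
def IsCycInterval (n : ℕ) (σ : ZMod n ≃ Fin n) (I : Finset (Fin n)) : Prop :=
  ∃ (i : ZMod n) (t : ℕ), t ≤ n - 2 ∧ I = cycInterval n σ i t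

/-- The chain `C i` of the chain decomposition of the intervals along `σ`: it contains
exactly one interval of each size `1, 2, …, n - 1`, where the interval of size `2k` is
`{x (i-k), …, x (i+k-1)}` and the interval of size `2k+1` is `{x (i-k), …, x (i+k)}`. -/
def chainC (n : ℕ) (σ : ZMod n ≃ Fin n) (i : ZMod n) : Finset (Finset (Fin n)) :=
  (Finset.Icc 1 (n - 1)).image fun m => cycInterval n σ (i - ((m / 2 : ℕ) : ZMod n)) (m - 1)

/-- `B` is the largest (by cardinality) member of the family `F`. -/
def IsLargestCard {n : ℕ} (F : Finset (Finset (Fin n))) (B : Finset (Fin n)) : Prop :=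
  B ∈ F ∧ ∀ X ∈ F, X.card ≤ B.card

/-- `B` is the second largest (by cardinality) member of the family `F`: exactly one
member of `F` has strictly larger cardinality. -/
def IsSecondLargestCard {n : ℕ} (F : Finset (Finset (Fin n))) (B : Finset (Fin n)) : Prop :=
  B ∈ F ∧ (F.filter fun X => B.card < X.card).card = 1

/-- The chain `C` is of type `(k+1)^R` with respect to `𝒜`. -/
def TypeKR {n : ℕ} (k : ℕ) (𝒜 C : Finset (Finset (Fin n))) : Prop :=
  (𝒜 ∩ C).card = k + 1 ∧ ∃ B, IsSecondLargestCard (𝒜 ∩ C) B ∧ Odd B.card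

/-- The chain `C` is of type `(k+1)^L` with respect to `𝒜`. -/
def TypeKL {n : ℕ} (k : ℕ) (𝒜 C : Finset (Finset (Fin n))) : Prop :=
  (𝒜 ∩ C).card = k + 1 ∧ ∃ B, IsSecondLargestCard (𝒜 ∩ C) B ∧ Even B.card

/-! Members of `chainC n σ j` are the intervals `[j - ⌊m/2⌋, j + ⌈m/2⌉)`, so containment between
members of nearby chains is decided by comparing sizes. All but the top of a chain of type `(k+1)`
lie in its second largest member, so any further member of `𝒜` containing that member completes
a `Y_k`. Let `S` (size `2t+1`) and `S'` (size `2s`) be the second largest members in the chains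
`i` and `i+2`. Avoiding `Y_k` bounds all sizes in chain `i+1` by `2t+1` and by `2s`, and rules out
`s < t` (then `S' ⊆ S`) and `s ≥ t+2` (then `S ⊆ S'`). If `s = t`, chains `i` and `i+1` carry
`k-1` members each below `S`; if `s = t+1`, chains `i+1` and `i+2` carry `k-1` members each below
`S'`. In two adjacent chains, the smallest member of one of them lies below all but the smallest
member of the other, and with `S` and the top of its chain this is a `Y_k'`. -/

lemma Finset.ssubset_of_subset_of_card_lt {α : Type*} {s t : Finset α} (h : s ⊆ t)
    (hcard : s.card < t.card) : s ⊂ t :=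
  Finset.ssubset_iff_subset_ne.2 ⟨h, ne_of_apply_ne card hcard.ne⟩

lemma IsChain.exists_strictMono_fin {α : Type*} [PartialOrder α] {s : Finset α}
    (hs : IsChain (· ≤ ·) (s : Set α)) : ∃ f : Fin s.card → α, StrictMono f ∧ ∀ j, f j ∈ s := by
  classical
  let _ := hs.linearOrder
  let e := (univ : Finset (s : Set α)).orderEmbOfFin (k := s.card) (by simp)
  exact ⟨fun j => (e j : α), fun a b h => e.strictMono h, fun j => (e j).2⟩

section CyclicIntervals

variable {n : ℕ} (σ : ZMod n ≃ Fin n)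

lemma mem_cycInterval {x : Fin n} {a : ZMod n} {t : ℕ} :
    x ∈ cycInterval n σ a t ↔ ∃ s ≤ t, σ (a + s) = x := by
  simp [cycInterval]

lemma card_cycInterval (a : ZMod n) {t : ℕ} (ht : t < n) :
    (cycInterval n σ a t).card = t + 1 := by
  rw [cycInterval, card_image_of_injOn, card_range]
  intro s hs s' hs' hss
  simp only [coe_range, Set.mem_Iio] at hs hs'
  have h := congrArg ZMod.val (add_left_cancel (σ.injective hss))
  rwa [ZMod.val_cast_of_lt (by omega), ZMod.val_cast_of_lt (by omega)] at h

lemma cycInterval_subset_cycInterval (b : ZMod n) {d t u : ℕ} (h : d + t ≤ u) :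
    cycInterval n σ (b + d) t ⊆ cycInterval n σ b u := by
  intro x hx
  obtain ⟨s, hs, rfl⟩ := (mem_cycInterval σ).1 hx
  exact (mem_cycInterval σ).2 ⟨d + s, by omega, by push_cast; ring_nf⟩

lemma sub_one_notMem_cycInterval (a : ZMod n) {t : ℕ} (ht : t + 2 ≤ n) :
    σ (a - 1) ∉ cycInterval n σ a t := by
  rw [mem_cycInterval]
  rintro ⟨s, hs, he⟩
  have h0 : ((s + 1 : ℕ) : ZMod n) = 0 := by
    push_cast
    linear_combination σ.injective he
  have := Nat.le_of_dvd (by omega) ((ZMod.natCast_eq_zero_iff _ _).1 h0)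
  omega

lemma eq_of_cycInterval_eq {a b : ZMod n} {t : ℕ} (ht : t + 2 ≤ n)
    (h : cycInterval n σ a t = cycInterval n σ b t) : a = b := by
  obtain ⟨s, hs, hsa⟩ : ∃ s ≤ t, σ (b + s) = σ a :=
    (mem_cycInterval σ).1 (h ▸ (mem_cycInterval σ).2 ⟨0, by simp⟩)
  rcases Nat.eq_zero_or_pos s with rfl | hs0
  · simpa using (σ.injective hsa).symm
  · refine absurd ?_ (sub_one_notMem_cycInterval σ a ht)
    rw [h, mem_cycInterval]
    refine ⟨s - 1, by omega, ?_⟩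
    rw [← σ.injective hsa, Nat.cast_sub hs0]
    ring_nf

end CyclicIntervals

section Chains

variable {n : ℕ} (σ : ZMod n ≃ Fin n)

def chainInterval (j : ZMod n) (m : ℕ) : Finset (Fin n) :=
  cycInterval n σ (j - ((m / 2 : ℕ) : ZMod n)) (m - 1)

lemma card_chainInterval (j : ZMod n) {m : ℕ} (h1 : 1 ≤ m) (hn : m < n) :
    (chainInterval σ j m).card = m := by
  rw [chainInterval, card_cycInterval σ _ (by omega)]
  omega

lemma mem_chainC_iff {j : ZMod n} {X : Finset (Fin n)} :
    X ∈ chainC n σ j ↔ 1 ≤ X.card ∧ X.card < n ∧ chainInterval σ j X.card = X := by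
  constructor
  · intro hX
    obtain ⟨m, hm, hmX⟩ := mem_image.1 hX
    change chainInterval σ j m = X at hmX
    subst hmX
    rw [mem_Icc] at hm
    rw [card_chainInterval σ j hm.1 (by omega)]
    exact ⟨hm.1, by omega, rfl⟩
  · rintro ⟨h1, hn, hX⟩
    exact mem_image.2 ⟨X.card, mem_Icc.2 ⟨h1, by omega⟩, hX⟩

lemma card_chainC_le (j : ZMod n) : (chainC n σ j).card ≤ n - 1 :=
  card_image_le.trans (by simp)

/-- The centres `j₁, j₂` of the two intervals are compared through the lift `c₁ - c₂` of
`j₁ - j₂` to `ℤ`; `hL` and `hR` compare their left and right endpoints. -/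
lemma chainInterval_subset_chainInterval {j₁ j₂ : ZMod n} {c₁ c₂ m m' : ℕ}
    (hj : j₁ + c₂ = j₂ + c₁) (hm : 1 ≤ m) (hL : c₂ + m / 2 ≤ c₁ + m' / 2)
    (hR : c₁ + (m + 1) / 2 ≤ c₂ + (m' + 1) / 2) :
    chainInterval σ j₁ m ⊆ chainInterval σ j₂ m' := by
  set d := c₁ + m' / 2 - (c₂ + m / 2)
  have hd : ((c₂ + m / 2 + d : ℕ) : ZMod n) = ((c₁ + m' / 2 : ℕ) : ZMod n) := by
    congr 1
    omega
  push_cast at hd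
  have hstart : j₁ - ((m / 2 : ℕ) : ZMod n) = j₂ - ((m' / 2 : ℕ) : ZMod n) + d := by
    linear_combination hj - hd
  rw [chainInterval, chainInterval, hstart]
  exact cycInterval_subset_cycInterval σ _ (by omega)

lemma subset_of_mem_chainC {j₁ j₂ : ZMod n} {c₁ c₂ : ℕ} {X Y : Finset (Fin n)}
    (hj : j₁ + c₂ = j₂ + c₁) (hX : X ∈ chainC n σ j₁) (hY : Y ∈ chainC n σ j₂)
    (hL : c₂ + X.card / 2 ≤ c₁ + Y.card / 2)
    (hR : c₁ + (X.card + 1) / 2 ≤ c₂ + (Y.card + 1) / 2) : X ⊆ Y := by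
  obtain ⟨hX1, -, hXe⟩ := (mem_chainC_iff σ).1 hX
  obtain ⟨-, -, hYe⟩ := (mem_chainC_iff σ).1 hY
  rw [← hXe, ← hYe]
  exact chainInterval_subset_chainInterval σ hj hX1 hL hR

lemma ssubset_of_mem_chainC {j₁ j₂ : ZMod n} {c₁ c₂ : ℕ} {X Y : Finset (Fin n)}
    (hj : j₁ + c₂ = j₂ + c₁) (hX : X ∈ chainC n σ j₁) (hY : Y ∈ chainC n σ j₂)
    (hL : c₂ + X.card / 2 ≤ c₁ + Y.card / 2)
    (hR : c₁ + (X.card + 1) / 2 ≤ c₂ + (Y.card + 1) / 2) (hXY : X.card < Y.card) : X ⊂ Y :=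
  ssubset_of_subset_of_card_lt (subset_of_mem_chainC σ hj hX hY hL hR) hXY

lemma isChain_inter_chainC (𝒜 : Finset (Finset (Fin n))) (j : ZMod n) :
    IsChain (· ⊆ ·) ((𝒜 ∩ chainC n σ j : Finset _) : Set (Finset (Fin n))) := by
  have hle : ∀ {X Y}, X ∈ chainC n σ j → Y ∈ chainC n σ j → X.card ≤ Y.card → X ⊆ Y :=
    fun hX hY h => subset_of_mem_chainC σ (c₁ := 0) (c₂ := 0) (by simp) hX hY (by omega)
      (by omega)
  intro X hX Y hY _
  have hXj := (mem_inter.1 hX).2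
  have hYj := (mem_inter.1 hY).2
  exact (le_total X.card Y.card).imp (hle hXj hYj) (hle hYj hXj)

lemma disjoint_chainC {j₁ j₂ : ZMod n} (h : j₁ ≠ j₂) :
    Disjoint (chainC n σ j₁) (chainC n σ j₂) := by
  refine disjoint_left.2 fun X h₁ h₂ => h ?_
  obtain ⟨hX1, hXn, he₁⟩ := (mem_chainC_iff σ).1 h₁
  obtain ⟨-, -, he₂⟩ := (mem_chainC_iff σ).1 h₂
  simpa using eq_of_cycInterval_eq σ (by omega) (he₁.trans he₂.symm)

lemma disjoint_chainC_of_add_eq {j₁ j₂ : ZMod n} {c₁ c₂ : ℕ} (hj : j₁ + c₂ = j₂ + c₁)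
    (hc : c₁ ≠ c₂) (hc₁ : c₁ < n) (hc₂ : c₂ < n) :
    Disjoint (chainC n σ j₁) (chainC n σ j₂) := by
  refine disjoint_chainC σ fun h => hc ?_
  have hcast : (c₁ : ZMod n) = c₂ := by linear_combination h - hj
  rwa [ZMod.natCast_eq_natCast_iff', Nat.mod_eq_of_lt hc₁, Nat.mod_eq_of_lt hc₂] at hcast

end Chains

section Families

variable {n k : ℕ} {𝒜 𝒞 F : Finset (Finset (Fin n))} {B C S T : Finset (Fin n)}

lemma IsChain.subset_of_card_le {F : Set (Finset (Fin n))} (hF : IsChain (· ⊆ ·) F)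
    {X Y : Finset (Fin n)} (hX : X ∈ F) (hY : Y ∈ F) (h : X.card ≤ Y.card) : X ⊆ Y :=
  (hF.total hX hY).elim id fun hYX => (eq_of_subset_of_card_le hYX h).ge

lemma IsChain.ssubset_of_card_le_of_ne {F : Set (Finset (Fin n))} (hF : IsChain (· ⊆ ·) F)
    {X Y : Finset (Fin n)} (hX : X ∈ F) (hY : Y ∈ F) (h : X.card ≤ Y.card) (hne : X ≠ Y) :
    X ⊂ Y :=
  Finset.ssubset_iff_subset_ne.2 ⟨hF.subset_of_card_le hX hY h, hne⟩

lemma containsYk_of_isChain (h𝒞 : 𝒞 ⊆ 𝒜) (hchain : IsChain (· ⊆ ·) (𝒞 : Set (Finset (Fin n))))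
    (hcard : 𝒞.card = k) (hB : B ∈ 𝒜) (hC : C ∈ 𝒜) (hBC : B ≠ C)
    (hsub : ∀ X ∈ 𝒞, X ⊂ B ∧ X ⊂ C) : ContainsYk k 𝒜 := by
  subst hcard
  obtain ⟨A, hA, hA𝒞⟩ := hchain.exists_strictMono_fin
  refine ⟨A, B, C, fun j => h𝒞 (hA𝒞 j), hB, hC, hA.injective,
    fun j => ((hsub _ (hA𝒞 j)).1).ne, fun j => ((hsub _ (hA𝒞 j)).2).ne, hBC,
    fun _ _ h => hA.monotone h, fun j => ((hsub _ (hA𝒞 j)).1).subset,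
    fun j => ((hsub _ (hA𝒞 j)).2).subset⟩

lemma containsYk'_of_isChain (h𝒞 : 𝒞 ⊆ 𝒜) (hchain : IsChain (· ⊆ ·) (𝒞 : Set (Finset (Fin n))))
    (hcard : 𝒞.card = k) (hB : B ∈ 𝒜) (hC : C ∈ 𝒜) (hBC : B ≠ C)
    (hsub : ∀ X ∈ 𝒞, B ⊂ X ∧ C ⊂ X) : ContainsYk' k 𝒜 := by
  subst hcard
  obtain ⟨A, hA, hA𝒞⟩ := hchain.exists_strictMono_fin
  have hA' : StrictAnti (A ∘ Fin.rev) := hA.comp_strictAnti Fin.rev_strictAnti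
  refine ⟨A ∘ Fin.rev, B, C, fun j => h𝒞 (hA𝒞 _), hB, hC, hA'.injective,
    fun j => ((hsub _ (hA𝒞 _)).1).ne', fun j => ((hsub _ (hA𝒞 _)).2).ne', hBC,
    fun _ _ h => hA'.antitone h, fun j => ((hsub _ (hA𝒞 _)).1).subset,
    fun j => ((hsub _ (hA𝒞 _)).2).subset⟩

lemma exists_top_of_isSecondLargestCard (hF : IsChain (· ⊆ ·) (F : Set (Finset (Fin n))))
    (hS : IsSecondLargestCard F S) : ∃ T ∈ F, S ⊂ T ∧ ∀ X ∈ F, X ≠ T → X ⊆ S := by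
  obtain ⟨hSF, hone⟩ := hS
  obtain ⟨T, hT⟩ := card_eq_one.1 hone
  have hbig : ∀ X ∈ F, S.card < X.card ↔ X = T := fun X hX => by
    simpa [hX] using Finset.ext_iff.1 hT X
  obtain ⟨hTF, hST⟩ : T ∈ F ∧ S.card < T.card := by
    simpa using (Finset.ext_iff.1 hT T).2 (mem_singleton_self T)
  refine ⟨T, hTF, ssubset_of_subset_of_card_lt (hF.subset_of_card_le hSF hTF hST.le) hST,
    fun X hX hXT => ?_⟩
  exact hF.subset_of_card_le hX hSF (not_lt.1 fun h => hXT ((hbig X hX).1 h))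

lemma exists_lower_of_isSecondLargestCard (hF : IsChain (· ⊆ ·) (F : Set (Finset (Fin n))))
    (hcard : F.card = k + 1) (hS : IsSecondLargestCard F S) :
    ∃ T ∈ F, S ⊂ T ∧ ∃ P ⊆ F, P.card = k - 1 ∧ ∀ X ∈ P, X ⊂ S := by
  obtain ⟨T, hTF, hST, hbelow⟩ := exists_top_of_isSecondLargestCard hF hS
  refine ⟨T, hTF, hST, (F.erase T).erase S, (erase_subset _ _).trans (erase_subset _ _), ?_,
    fun X hX => ?_⟩
  · rw [card_erase_of_mem (mem_erase.2 ⟨hST.ne, hS.1⟩), card_erase_of_mem hTF, hcard]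
    omega
  · obtain ⟨hXS, hX⟩ := mem_erase.1 hX
    obtain ⟨hXT, hXF⟩ := mem_erase.1 hX
    exact Finset.ssubset_iff_subset_ne.2 ⟨hbelow X hXF hXT, hXS⟩

lemma containsYk_of_secondLargest_subset (hF𝒜 : F ⊆ 𝒜)
    (hF : IsChain (· ⊆ ·) (F : Set (Finset (Fin n)))) (hcard : F.card = k + 1)
    (hS : IsSecondLargestCard F S) {D : Finset (Fin n)} (hD : D ∈ 𝒜) (hDF : D ∉ F)
    (hSD : S ⊆ D) : ContainsYk k 𝒜 := by
  obtain ⟨T, hTF, hST, hbelow⟩ := exists_top_of_isSecondLargestCard hF hS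
  refine containsYk_of_isChain ((erase_subset T F).trans hF𝒜) (hF.mono (by simp))
    (by simp [card_erase_of_mem hTF, hcard]) (hF𝒜 hTF) hD (ne_of_mem_of_not_mem hTF hDF)
    fun X hX => ?_
  obtain ⟨hXT, hXF⟩ := mem_erase.1 hX
  exact ⟨(hbelow X hXF hXT).trans_ssubset hST,
    Finset.ssubset_iff_subset_ne.2 ⟨(hbelow X hXF hXT).trans hSD, ne_of_mem_of_not_mem hXF hDF⟩⟩

/-- The `Y_k'` formed by `T ⊃ S ⊃ Q \ {D}` above `D` and `B`. -/
lemma containsYk'_of_chain_insert_erase (hk : 2 ≤ k) {Q : Finset (Finset (Fin n))}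
    (hQ𝒜 : Q ⊆ 𝒜) (hQ : IsChain (· ⊆ ·) (Q : Set (Finset (Fin n)))) (hQcard : Q.card = k - 1)
    {D : Finset (Fin n)} (hD : D ∈ Q) (hB : B ∈ 𝒜) (hBD : B ≠ D)
    (hDB : ∀ X ∈ Q, X ≠ D → D ⊂ X ∧ B ⊂ X) (hS : S ∈ 𝒜) (hT : T ∈ 𝒜) (hST : S ⊂ T)
    (hQS : ∀ X ∈ Q, X ⊂ S) (hBS : B ⊂ S) : ContainsYk' k 𝒜 := by
  have hSQ : S ∉ Q.erase D := fun h => (hQS S (mem_of_mem_erase h)).ne rfl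
  have hTQ : T ∉ insert S (Q.erase D) := by
    simp only [mem_insert, not_or]
    exact ⟨hST.ne', fun h => (hQS T (mem_of_mem_erase h)).asymm hST⟩
  refine containsYk'_of_isChain (𝒞 := insert T (insert S (Q.erase D))) ?_ ?_ ?_ hB (hQ𝒜 hD)
    hBD ?_
  · simp [insert_subset_iff, hT, hS, (erase_subset D Q).trans hQ𝒜]
  · rw [coe_insert, coe_insert]
    refine ((hQ.mono (by simp)).insert fun X hX _ => ?_).insert fun X hX _ => ?_
    · exact Or.inr (hQS X (mem_of_mem_erase hX)).subset
    · rcases hX with rfl | hX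
      · exact Or.inr hST.subset
      · exact Or.inr ((hQS X (mem_of_mem_erase hX)).subset.trans hST.subset)
  · rw [card_insert_of_notMem hTQ, card_insert_of_notMem hSQ, card_erase_of_mem hD, hQcard]
    omega
  · intro X hX
    rcases mem_insert.1 hX with rfl | hX
    · exact ⟨hBS.trans hST, (hQS D hD).trans hST⟩
    rcases mem_insert.1 hX with rfl | hX
    · exact ⟨hBS, hQS D hD⟩
    obtain ⟨hXD, hXQ⟩ := mem_erase.1 hX
    exact (hDB X hXQ hXD).symm

end Families

section ChainPatterns

variable {n k : ℕ} (σ : ZMod n ≃ Fin n) {𝒜 : Finset (Finset (Fin n))}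

lemma containsYk_of_secondLargest_subset_mem_chainC {j₁ j₂ : ZMod n} {c₁ c₂ : ℕ}
    (hj : j₁ + c₂ = j₂ + c₁) (hc : c₁ ≠ c₂) (hc₁ : c₁ < n) (hc₂ : c₂ < n)
    (hcard : (𝒜 ∩ chainC n σ j₁).card = k + 1) {S D : Finset (Fin n)}
    (hS : IsSecondLargestCard (𝒜 ∩ chainC n σ j₁) S) (hD : D ∈ 𝒜 ∩ chainC n σ j₂)
    (hL : c₂ + S.card / 2 ≤ c₁ + D.card / 2)
    (hR : c₁ + (S.card + 1) / 2 ≤ c₂ + (D.card + 1) / 2) : ContainsYk k 𝒜 := by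
  obtain ⟨hD𝒜, hDj⟩ := mem_inter.1 hD
  refine containsYk_of_secondLargest_subset inter_subset_left (isChain_inter_chainC σ 𝒜 j₁)
    hcard hS hD𝒜 (fun h => disjoint_right.1 (disjoint_chainC_of_add_eq σ hj hc hc₁ hc₂) hDj
      (mem_inter.1 h).2) ?_
  exact subset_of_mem_chainC σ hj (mem_inter.1 hS.1).2 hDj hL hR

lemma containsYk'_of_adjacent_chains (hk : 2 ≤ k) {j₁ j₂ : ZMod n} (hj : j₁ + 1 = j₂)
    {P Q : Finset (Finset (Fin n))} (hP : P ⊆ 𝒜 ∩ chainC n σ j₁) (hQ : Q ⊆ 𝒜 ∩ chainC n σ j₂)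
    (hPcard : P.card = k - 1) (hQcard : Q.card = k - 1) {S T : Finset (Fin n)} (hS : S ∈ 𝒜)
    (hT : T ∈ 𝒜) (hST : S ⊂ T) (hPS : ∀ X ∈ P, X ⊂ S) (hQS : ∀ X ∈ Q, X ⊂ S) :
    ContainsYk' k 𝒜 := by
  have hj' : j₁ + ((1 : ℕ) : ZMod n) = j₂ + ((0 : ℕ) : ZMod n) := by simpa using hj
  have hP𝒜 : P ⊆ 𝒜 := hP.trans inter_subset_left
  have hQ𝒜 : Q ⊆ 𝒜 := hQ.trans inter_subset_left
  have hPj : P ⊆ chainC n σ j₁ := hP.trans inter_subset_right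
  have hQj : Q ⊆ chainC n σ j₂ := hQ.trans inter_subset_right
  have hPchain := (isChain_inter_chainC σ 𝒜 j₁).mono (coe_subset.2 hP)
  have hQchain := (isChain_inter_chainC σ 𝒜 j₂).mono (coe_subset.2 hQ)
  obtain ⟨A, hA, hAmin⟩ := P.exists_min_image card (card_pos.1 (by omega))
  obtain ⟨D, hD, hDmin⟩ := Q.exists_min_image card (card_pos.1 (by omega))
  have hAD : A ≠ D := by
    obtain ⟨hA1, hAn, -⟩ := (mem_chainC_iff σ).1 (hPj hA)
    exact ne_of_mem_of_not_mem (hPj hA) (disjoint_right.1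
      (disjoint_chainC_of_add_eq σ hj' zero_ne_one (by omega) (by omega)) (hQj hD))
  have hAY : ∀ Y ∈ P, Y ≠ A → A ⊂ Y := fun Y hY hYA =>
    hPchain.ssubset_of_card_le_of_ne hA hY (hAmin Y hY) hYA.symm
  have hDX : ∀ X ∈ Q, X ≠ D → D ⊂ X := fun X hX hXD =>
    hQchain.ssubset_of_card_le_of_ne hD hX (hDmin X hX) hXD.symm
  by_cases hAQ : ∀ X ∈ Q, X ≠ D → A ⊂ X
  · exact containsYk'_of_chain_insert_erase hk hQ𝒜 hQchain hQcard hD (hP𝒜 hA) hAD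
      (fun X hX hXD => ⟨hDX X hX hXD, hAQ X hX hXD⟩) hS hT hST hQS (hPS A hA)
  push Not at hAQ
  obtain ⟨X, hX, hXD, hAX⟩ := hAQ
  have hDX' := card_lt_card (hDX X hX hXD)
  -- `A ⊄ X` forces `X` to be short, and then `D` fits into every `Y ∈ P` other than `A`.
  have hXshort : X.card / 2 < A.card / 2 + 1 := by
    by_contra h
    exact hAX (ssubset_of_mem_chainC σ (c₁ := 0) (c₂ := 1) (by simpa using hj) (hPj hA)
      (hQj hX) (by omega) (by omega) (by omega))
  refine containsYk'_of_chain_insert_erase hk hP𝒜 hPchain hPcard hA (hQ𝒜 hD) hAD.symm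
    (fun Y hY hYA => ⟨hAY Y hY hYA, ?_⟩) hS hT hST hPS (hQS D hD)
  have hAY' := card_lt_card (hAY Y hY hYA)
  exact ssubset_of_mem_chainC σ hj'.symm (hQj hD) (hPj hY) (by omega) (by omega) (by omega)

end ChainPatterns

theorem Yk_no_RL_pattern_general (n k : ℕ) (hk : 2 ≤ k) (σ : ZMod n ≃ Fin n)
    (𝒜 : Finset (Finset (Fin n)))
    (hY : ¬ ContainsYk k 𝒜) (hY' : ¬ ContainsYk' k 𝒜) (i : ZMod n) :
    ¬ (TypeKR k 𝒜 (chainC n σ i) ∧ (𝒜 ∩ chainC n σ (i + 1)).card = k - 1 ∧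
        TypeKL k 𝒜 (chainC n σ (i + 2))) := by
  rintro ⟨⟨hF₀, S, hS, t, hSt⟩, hF₁, hF₂, S', hS', s, hS's⟩
  have hn : k + 2 ≤ n := by
    have := (card_le_card (inter_subset_right : 𝒜 ∩ chainC n σ i ⊆ _)).trans (card_chainC_le σ i)
    omega
  have hF₁short : ∀ D ∈ 𝒜 ∩ chainC n σ (i + 1), D.card ≤ 2 * t + 1 ∧ D.card ≤ 2 * s :=
    fun D hD => ⟨not_lt.1 fun h => hY (containsYk_of_secondLargest_subset_mem_chainC σ
        (c₁ := 0) (c₂ := 1) (by simp) (by simp) (by omega) (by omega) hF₀ hS hD (by omega)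
        (by omega)),
      not_lt.1 fun h => hY (containsYk_of_secondLargest_subset_mem_chainC σ (c₁ := 2) (c₂ := 1)
        (by push_cast; ring) (by simp) (by omega) (by omega) hF₂ hS' hD (by omega) (by omega))⟩
  obtain ⟨hS𝒜, hSi⟩ := mem_inter.1 hS.1
  obtain ⟨hS'𝒜, hS'i⟩ := mem_inter.1 hS'.1
  rcases (by omega : s < t ∨ s = t ∨ s = t + 1 ∨ t + 2 ≤ s) with hst | rfl | rfl | hst
  · exact hY (containsYk_of_secondLargest_subset_mem_chainC σ (c₁ := 2) (c₂ := 0)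
      (by push_cast; ring) (by simp) (by omega) (by omega) hF₂ hS' hS.1 (by omega) (by omega))
  · obtain ⟨T, hT, hST, P, hP, hPcard, hPS⟩ :=
      exists_lower_of_isSecondLargestCard (isChain_inter_chainC σ 𝒜 i) hF₀ hS
    refine hY' (containsYk'_of_adjacent_chains σ hk rfl hP subset_rfl hPcard hF₁ hS𝒜
      (mem_inter.1 hT).1 hST hPS fun X hX => ?_)
    have := hF₁short X hX
    exact ssubset_of_mem_chainC σ (c₁ := 1) (c₂ := 0) (by simp) (mem_inter.1 hX).2 hSi
      (by omega) (by omega) (by omega)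
  · obtain ⟨T', hT', hST', Q, hQ, hQcard, hQS⟩ :=
      exists_lower_of_isSecondLargestCard (isChain_inter_chainC σ 𝒜 _) hF₂ hS'
    refine hY' (containsYk'_of_adjacent_chains σ hk (by ring) subset_rfl hQ hF₁ hQcard hS'𝒜
      (mem_inter.1 hT').1 hST' (fun X hX => ?_) hQS)
    have := hF₁short X hX
    exact ssubset_of_mem_chainC σ (c₁ := 1) (c₂ := 2) (by push_cast; ring) (mem_inter.1 hX).2
      hS'i (by omega) (by omega) (by omega)
  · exact hY (containsYk_of_secondLargest_subset_mem_chainC σ (c₁ := 0) (c₂ := 2) (by simp)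
      (by simp) (by omega) (by omega) hF₀ hS hS'.1 (by omega) (by omega))

/-- There are no three consecutive chains `C i`, `C (i+1)`, `C (i+2)` such that `C i` is of
type `(k+1)^R`, `|𝒜 ∩ C (i+1)| = k - 1`, and `C (i+2)` is of type `(k+1)^L`. -/
theorem Yk_no_RL_pattern (n k : ℕ) (hk : 2 ≤ k) (σ : ZMod n ≃ Fin n)
    (𝒜 : Finset (Finset (Fin n))) (hInt : ∀ I ∈ 𝒜, IsCycInterval n σ I)
    (hY : ¬ ContainsYk k 𝒜) (hY' : ¬ ContainsYk' k 𝒜) (i : ZMod n) :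
    ¬ (TypeKR k 𝒜 (chainC n σ i) ∧ (𝒜 ∩ chainC n σ (i + 1)).card = k - 1 ∧
        TypeKL k 𝒜 (chainC n σ (i + 2))) :=
  Yk_no_RL_pattern_general n k hk σ 𝒜 hY hY' i
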